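/- arXiv:2604.20776 — 4 statements merged into one kernel-verified Lean document; each statement's English description precedes it below -/
import Mathlib

section
/- Every matrix A ∈ Matrix (ZMod d) (ZMod d) ℂ is recovered from its Weyl symbol by the inversion formula A = (1/d) Σ_{k,j ∈ ZMod d} Ã(k,j) · D(k,j)†, where Ã(k,j) = Tr(A · D(k,j)). -/
open Matrix Complex

noncomputable section

/-- `ω = exp(2πi/d)`, a primitive `d`-th root of unity. -/
def omega (d : ℕ) : ℂ := Complex.exp (2 * Real.pi * Complex.I / d)

/-- Powers of `ω` with exponent valued in `ZMod d`, evaluated via the canonical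
integer representative (well-defined since `ω ^ d = 1`). -/
def wpow (d : ℕ) (x : ZMod d) : ℂ := omega d ^ x.val

/-- The clock matrix `Z`, acting as `Z e_n = ω^n e_n`. -/
def clockZ (d : ℕ) : Matrix (ZMod d) (ZMod d) ℂ :=
  Matrix.diagonal (fun n => wpow d n)

/-- The shift matrix `X`, acting as `X e_n = e_{n+1}`. -/
def shiftX (d : ℕ) : Matrix (ZMod d) (ZMod d) ℂ :=
  Matrix.of (fun i j => if i = j + 1 then 1 else 0)

/-- The displacement operator `D(k,j) = ω^{-2⁻¹ k j} Z^k X^j`. -/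
def Dop (d : ℕ) [NeZero d] (k j : ZMod d) : Matrix (ZMod d) (ZMod d) ℂ :=
  wpow d (-(2⁻¹ * k * j)) • (clockZ d ^ k.val * shiftX d ^ j.val)

/-- The Weyl symbol of a matrix `A`: `Ã(k,j) = Tr(A · D(k,j))`. -/
def weylSymbol (d : ℕ) [NeZero d] (A : Matrix (ZMod d) (ZMod d) ℂ) (k j : ZMod d) : ℂ :=
  Matrix.trace (A * Dop d k j)

set_option linter.unusedSectionVars false

section aux

variable (d : ℕ) [NeZero d]

lemma omega_prim : IsPrimitiveRoot (omega d) d := by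
  simpa [omega, mul_comm, mul_assoc, mul_div_assoc] using Complex.isPrimitiveRoot_exp d (NeZero.ne d)

lemma omega_pow_d : omega d ^ d = 1 := (omega_prim d).pow_eq_one

lemma wpow_natCast (m : ℕ) : wpow d ((m : ZMod d)) = omega d ^ m := by
  unfold wpow
  rw [ZMod.val_natCast]
  conv_rhs => rw [← Nat.mod_add_div m d]
  rw [pow_add, pow_mul, omega_pow_d, one_pow, mul_one]

lemma wpow_add (x y : ZMod d) : wpow d (x + y) = wpow d x * wpow d y := by
  have hx : ((x.val : ℕ) : ZMod d) = x := ZMod.natCast_rightInverse x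
  have hy : ((y.val : ℕ) : ZMod d) = y := ZMod.natCast_rightInverse y
  rw [← hx, ← hy, ← Nat.cast_add, wpow_natCast, wpow_natCast, wpow_natCast, pow_add]

lemma wpow_zero : wpow d 0 = 1 := by simp [wpow]

lemma wpow_neg (x : ZMod d) : wpow d (-x) = (wpow d x)⁻¹ := by
  refine eq_inv_of_mul_eq_one_left ?_
  rw [← wpow_add, neg_add_cancel, wpow_zero]

lemma wpow_ne_zero (x : ZMod d) : wpow d x ≠ 0 :=
  pow_ne_zero _ (by simp [omega, Complex.exp_ne_zero])

lemma conj_wpow (x : ZMod d) : (starRingEnd ℂ) (wpow d x) = wpow d (-x) := by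
  rw [wpow_neg]
  unfold wpow omega
  have h : (starRingEnd ℂ) (Complex.exp (2 * Real.pi * Complex.I / d)) =
      (Complex.exp (2 * Real.pi * Complex.I / d))⁻¹ := by
    rw [← Complex.exp_conj, ← Complex.exp_neg]
    congr 1
    simp [map_div₀, Complex.conj_I, map_ofNat]
    ring
  rw [map_pow, h, inv_pow]

lemma wpow_pow (x : ZMod d) (a : ℕ) : (wpow d x) ^ a = wpow d ((a : ZMod d) * x) := by
  have hx : ((x.val : ℕ) : ZMod d) = x := ZMod.natCast_rightInverse x
  rw [← hx, ← Nat.cast_mul, wpow_natCast, wpow_natCast, ← pow_mul, mul_comm]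

lemma wpow_eq_one_iff (x : ZMod d) : wpow d x = 1 ↔ x = 0 := by
  constructor
  · intro h
    have hdvd := ((omega_prim d).pow_eq_one_iff_dvd x.val).mp h
    have hlt := ZMod.val_lt x
    have hv : x.val = 0 := Nat.eq_zero_of_dvd_of_lt hdvd hlt
    exact (ZMod.val_eq_zero x).mp hv
  · rintro rfl; exact wpow_zero d

lemma sum_wpow (t : ZMod d) : ∑ k : ZMod d, wpow d (k * t) = if t = 0 then (d : ℂ) else 0 := by
  split_ifs with ht
  · subst ht; simp [wpow_zero, Finset.card_univ, ZMod.card]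
  · have hterm : ∀ k : ZMod d, wpow d (k * t) = (wpow d t) ^ k.val := by
      intro k
      rw [wpow_pow, ZMod.natCast_rightInverse k]
    have hc : wpow d t ≠ 1 := fun h => ht ((wpow_eq_one_iff d t).mp h)
    have hsum : ∑ k : ZMod d, wpow d (k * t) = ∑ i ∈ Finset.range d, (wpow d t) ^ i := by
      rw [Finset.sum_congr rfl (fun k _ => hterm k)]
      exact Finset.sum_nbij' (fun k => k.val) (fun i => (i : ZMod d))
        (fun k _ => Finset.mem_range.mpr (ZMod.val_lt k))
        (fun i hi => Finset.mem_univ _)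
        (fun k _ => ZMod.natCast_rightInverse k)
        (fun i hi => ZMod.val_natCast_of_lt (Finset.mem_range.mp hi))
        (fun k _ => rfl)
    rw [hsum, geom_sum_eq hc]
    have : wpow d t ^ d = 1 := by
      unfold wpow; rw [← pow_mul, mul_comm, pow_mul, omega_pow_d, one_pow]
    rw [this]; simp

lemma shiftX_pow (a : ℕ) (i j : ZMod d) :
    (shiftX d ^ a) i j = if i = j + (a : ZMod d) then 1 else 0 := by
  induction a generalizing i j with
  | zero => simp [Matrix.one_apply, eq_comm]
  | succ n ih =>
    rw [pow_succ, Matrix.mul_apply]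
    simp only [ih]
    simp only [shiftX, Matrix.of_apply]
    have hterm : ∀ x : ZMod d, (if i = x + (n : ZMod d) then (1:ℂ) else 0) *
        (if x = j + 1 then 1 else 0) =
        if x = j + 1 then (if i = x + (n : ZMod d) then 1 else 0) else 0 := by
      intro x; split_ifs <;> simp
    rw [Finset.sum_congr rfl (fun x _ => hterm x),
      Finset.sum_ite_eq' (Finset.univ : Finset (ZMod d)) (j+1)
        (fun x => if i = x + (n : ZMod d) then (1:ℂ) else 0)]
    have harg : j + 1 + (n : ZMod d) = j + ((n : ℕ) + 1 : ℕ) := by push_cast; ring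
    simp [harg]

lemma clockZ_pow (a : ℕ) (i j : ZMod d) :
    (clockZ d ^ a) i j = if i = j then wpow d ((a : ZMod d) * i) else 0 := by
  rw [clockZ, Matrix.diagonal_pow, Matrix.diagonal_apply]
  split_ifs with h
  · subst h; rw [Pi.pow_apply, wpow_pow]
  · rfl

lemma Dop_apply (k j m n : ZMod d) :
    Dop d k j m n = if m = n + j then wpow d (-(2⁻¹ * k * j) + k * m) else 0 := by
  rw [Dop, Matrix.smul_apply, Matrix.mul_apply]
  simp only [clockZ_pow, shiftX_pow, ite_mul, zero_mul, one_mul, mul_zero, mul_ite, mul_one]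
  rw [Finset.sum_ite_eq' (Finset.univ : Finset (ZMod d)) (n + (j.val : ZMod d))
    (fun x => if m = x then wpow d ((k.val : ZMod d) * m) else 0)]
  simp only [Finset.mem_univ, if_true, ZMod.natCast_val, ZMod.cast_id]
  split_ifs with h
  · rw [smul_eq_mul, ← wpow_add]
  · simp

lemma weylSymbol_eq (A : Matrix (ZMod d) (ZMod d) ℂ) (k j : ZMod d) :
    weylSymbol d A k j = ∑ m : ZMod d, A m (m + j) * wpow d (-(2⁻¹ * k * j) + k * (m + j)) := by
  rw [weylSymbol, Matrix.trace]
  refine Finset.sum_congr rfl (fun m _ => ?_)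
  rw [Matrix.diag_apply, Matrix.mul_apply]
  simp only [Dop_apply, mul_ite, mul_zero]
  rw [Finset.sum_ite_eq' (Finset.univ : Finset (ZMod d)) (m + j)
    (fun n => A m n * wpow d (-(2⁻¹ * k * j) + k * n))]
  simp

end aux

theorem weyl_inversion
    (d : ℕ) [NeZero d] (hd : Nat.Prime d) (hodd : Odd d)
    (A : Matrix (ZMod d) (ZMod d) ℂ) :
    A = (1 / (d : ℂ)) • ∑ k : ZMod d, ∑ j : ZMod d,
      weylSymbol d A k j • (Dop d k j)ᴴ := by
  have hdC : (d : ℂ) ≠ 0 := Nat.cast_ne_zero.mpr (NeZero.ne d)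
  ext a b
  simp only [Matrix.smul_apply, Matrix.sum_apply, Matrix.conjTranspose_apply, smul_eq_mul]
  simp only [← starRingEnd_apply]
  have hterm : ∀ k j : ZMod d,
      weylSymbol d A k j * (starRingEnd ℂ) (Dop d k j b a) =
      if j = b - a then (∑ m : ZMod d, A m (m + j) * wpow d (k * (m - a))) else 0 := by
    intro k j
    rw [weylSymbol_eq, Dop_apply]
    by_cases h : b = a + j
    · have hj : j = b - a := by rw [h]; ring
      rw [if_pos h, if_pos hj, conj_wpow, Finset.sum_mul]
      refine Finset.sum_congr rfl fun m _ => ?_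
      rw [mul_assoc, ← wpow_add]
      congr 2
      rw [h]; ring
    · have hj : ¬ (j = b - a) := fun hj => h (by rw [hj]; ring)
      rw [if_neg h, if_neg hj, map_zero, mul_zero]
  have hinner : ∀ k : ZMod d,
      (∑ j : ZMod d, weylSymbol d A k j * (starRingEnd ℂ) (Dop d k j b a)) =
      ∑ m : ZMod d, A m (m + (b - a)) * wpow d (k * (m - a)) := by
    intro k
    rw [Finset.sum_congr rfl (fun j _ => hterm k j),
      Finset.sum_ite_eq' (Finset.univ : Finset (ZMod d)) (b - a)
        (fun j => ∑ m : ZMod d, A m (m + j) * wpow d (k * (m - a)))]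
    simp
  rw [Finset.sum_congr rfl (fun k _ => hinner k), Finset.sum_comm]
  have hm : ∀ m : ZMod d,
      (∑ k : ZMod d, A m (m + (b - a)) * wpow d (k * (m - a))) =
      A m (m + (b - a)) * (if m - a = 0 then (d : ℂ) else 0) := by
    intro m
    rw [← Finset.mul_sum, sum_wpow]
  rw [Finset.sum_congr rfl (fun m _ => hm m)]
  have hcond : ∀ m : ZMod d,
      A m (m + (b - a)) * (if m - a = 0 then (d : ℂ) else 0) =
      if m = a then A m (m + (b - a)) * d else 0 := by
    intro m
    by_cases h : m = a
    · rw [if_pos h, if_pos (by rw [h, sub_self])]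
    · rw [if_neg h, if_neg (fun hs => h (sub_eq_zero.mp hs)), mul_zero]
  rw [Finset.sum_congr rfl (fun m _ => hcond m),
    Finset.sum_ite_eq' (Finset.univ : Finset (ZMod d)) a
      (fun m => A m (m + (b - a)) * d)]
  simp only [Finset.mem_univ, if_true]
  have : a + (b - a) = b := by ring
  rw [this]
  field_simp
end
end

section
/- (Discrete Wigner propagator.) For any unitary matrix U on ℂ^d and any matrix ρ on ℂ^d, the discrete Wigner function of U ρ U† is obtained from that of ρ by the kernel G_W: for all (m',n'), (UρU†)_W(m',n') = Σ_{(m,n) ∈ ZMod d × ZMod d} G_W((m',n'),(m,n)) · ρ_W(m,n), where G_W((m',n'),(m,n)) = (1/d²) Σ_{m̃,ñ ∈ ZMod d} ω^{−2[m̃(n'−n) − ñ(m'−m)]} U_W(m+m̃, n+ñ) · conj(U_W(m'−m̃, n'−ñ)). -/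
open Matrix Complex

noncomputable section

/-- The discrete Wigner function of `ρ`:
`ρ_W(m,n) = (1/d²) Σ_{k,j} Tr(ρ·D(k,j)) ω^{jn−km}`. -/
def wignerFn (d : ℕ) [NeZero d] (ρ : Matrix (ZMod d) (ZMod d) ℂ) (m n : ZMod d) : ℂ :=
  (1 / (d : ℂ) ^ 2) * ∑ k : ZMod d, ∑ j : ZMod d,
    weylSymbol d ρ k j * wpow d (j * n - k * m)

/-- The phase-space symbol of `B`:
`B_W(m,n) = (1/d) Σ_{k,j} Tr(B·D(k,j)) ω^{jn−km}`. -/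
def psSymbol (d : ℕ) [NeZero d] (B : Matrix (ZMod d) (ZMod d) ℂ) (m n : ZMod d) : ℂ :=
  (1 / (d : ℂ)) * ∑ k : ZMod d, ∑ j : ZMod d,
    weylSymbol d B k j * wpow d (j * n - k * m)

/-- The discrete Wigner propagator of a unitary `U`:
`G_W((m',n'),(m,n)) = (1/d²) Σ_{m̃,ñ} ω^{−2[m̃(n'−n) − ñ(m'−m)]}
  U_W(m+m̃, n+ñ) · conj(U_W(m'−m̃, n'−ñ))`. -/
def propG (d : ℕ) [NeZero d] (U : Matrix (ZMod d) (ZMod d) ℂ)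
    (μ' μ : ZMod d × ZMod d) : ℂ :=
  (1 / (d : ℂ) ^ 2) * ∑ mt : ZMod d, ∑ nt : ZMod d,
    wpow d (-(2 * (mt * (μ'.2 - μ.2) - nt * (μ'.1 - μ.1)))) *
      psSymbol d U (μ.1 + mt) (μ.2 + nt) *
      (starRingEnd ℂ) (psSymbol d U (μ'.1 - mt) (μ'.2 - nt))

/-!
When `2` is invertible mod `d`, summing out `k` in the definition turns the phase-space symbol
into a Fourier transform along anti-diagonals, `B_W(m,n) = Σ_s B(m-s, m+s) ω^{2sn}`, which can be
inverted in `n`. Substituting this inversion for the entries of `ρ` in `(UρU†)_W` writes the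
left-hand side as `Σ_{m,n} K(m,n) ρ_W(m,n)` for an explicit kernel `K` built from entries of `U`.
Expanding both factors `U_W` of `G_W` the same way, with anti-diagonal variables `p` and `q`, and
summing out `ñ` forces `q = m - m' - p`; this leaves a double sum over `(m̃, p)`, which the
substitution `(m̃, p) ↦ (m' - m - m̃ + p, -m̃ - p)`, invertible because `2` is, turns
into `K`.
-/

namespace DiscreteWigner

lemma isUnit_two_of_odd {d : ℕ} (hd : Odd d) : IsUnit (2 : ZMod d) := by
  exact_mod_cast (ZMod.isUnit_iff_coprime 2 d).2 (Nat.coprime_two_left.2 hd)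

section Reindexing

variable {R M : Type*} [CommRing R] [Fintype R] [AddCommMonoid M]

lemma sum_comp_two_mul (h2 : IsUnit (2 : R)) (f : R → M) : ∑ s, f (2 * s) = ∑ j, f j := by
  simpa only [Units.mulLeft_apply, IsUnit.unit_spec] using Equiv.sum_comp (Units.mulLeft h2.unit) f

lemma sum_sum_comp_sub_add (h2 : IsUnit (2 : R)) (f : R → R → M) :
    ∑ m, ∑ u, f (m - u) (m + u) = ∑ a, ∑ b, f a b := by
  have hinj : Function.Injective fun p : R × R => (p.1 - p.2, p.1 + p.2) := by
    rintro ⟨m, u⟩ ⟨m', u'⟩ h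
    obtain ⟨hsub, hadd⟩ := Prod.mk.inj h
    ext
    · exact h2.mul_left_cancel (by linear_combination hadd + hsub)
    · exact h2.mul_left_cancel (by linear_combination hadd - hsub)
  rw [← Fintype.sum_prod_type', ← Fintype.sum_prod_type']
  exact Fintype.sum_bijective _ hinj.bijective_of_finite _ _ fun _ => rfl

end Reindexing

-- The kernel `K` obtained by feeding the inversion formula into `(UρU†)_W`.
def propKernel (d : ℕ) [NeZero d] (U : Matrix (ZMod d) (ZMod d) ℂ) (m' n' m n : ZMod d) : ℂ :=
  (1 / d) * ∑ s, ∑ u,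
    U (m' - s) (m - u) * starRingEnd ℂ (U (m' + s) (m + u)) * wpow d (2 * (s * n' - u * n))

variable {d : ℕ} [NeZero d]

lemma wpow_eq_stdAddChar (x : ZMod d) : wpow d x = ZMod.stdAddChar x := by
  rw [wpow, omega, ZMod.stdAddChar_apply, ZMod.toCircle_apply, ← Complex.exp_nat_mul]
  ring_nf

lemma wpow_add (x y : ZMod d) : wpow d (x + y) = wpow d x * wpow d y := by
  simp only [wpow_eq_stdAddChar, AddChar.map_add_eq_mul]

lemma conj_wpow (x : ZMod d) : starRingEnd ℂ (wpow d x) = wpow d (-x) := by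
  simp only [wpow_eq_stdAddChar, AddChar.map_neg_eq_conj]

lemma sum_wpow_mul (c : ZMod d) :
    ∑ x : ZMod d, wpow d (x * c) = if c = 0 then (d : ℂ) else 0 := by
  simp only [wpow_eq_stdAddChar, AddChar.sum_mulShift c (ZMod.isPrimitive_stdAddChar d),
    ZMod.card, Nat.cast_ite, Nat.cast_zero]

lemma clockZ_pow_val (k : ZMod d) : clockZ d ^ k.val = diagonal fun a => wpow d (k * a) := by
  rw [clockZ, diagonal_pow]
  congr 1
  funext a
  rw [Pi.pow_apply, wpow_eq_stdAddChar, wpow_eq_stdAddChar, ← AddChar.map_nsmul_eq_pow,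
    nsmul_eq_mul, ZMod.natCast_zmod_val]

lemma shiftX_pow (t : ℕ) :
    shiftX d ^ t = of fun a b : ZMod d => if a = b + t then (1 : ℂ) else 0 := by
  induction t with
  | zero => ext a b; simp [one_apply]
  | succ t ih =>
    ext a b
    rw [pow_succ, ih, mul_apply, Finset.sum_eq_single (b + 1)]
    · simp [shiftX, add_assoc, add_comm (1 : ZMod d)]
    · intro c _ hc
      simp [shiftX, hc]
    · simp

lemma Dop_apply (k j a b : ZMod d) :
    Dop d k j a b = if a = b + j then wpow d (k * a - 2⁻¹ * k * j) else 0 := by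
  simp only [Dop, clockZ_pow_val, shiftX_pow, ZMod.natCast_zmod_val, Matrix.smul_apply,
    diagonal_mul, of_apply, mul_ite, mul_one, mul_zero, smul_eq_mul, sub_eq_neg_add, wpow_add]

lemma weylSymbol_eq_sum (A : Matrix (ZMod d) (ZMod d) ℂ) (k j : ZMod d) :
    weylSymbol d A k j = ∑ a, A a (a + j) * wpow d (k * (a + j) - 2⁻¹ * k * j) := by
  simp [weylSymbol, trace, mul_apply, Dop_apply]

lemma psSymbol_eq_sum (h2 : IsUnit (2 : ZMod d)) (B : Matrix (ZMod d) (ZMod d) ℂ)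
    (m n : ZMod d) :
    psSymbol d B m n = ∑ s, B (m - s) (m + s) * wpow d (2 * s * n) := by
  have hd : (d : ℂ) ≠ 0 := NeZero.ne _
  calc psSymbol d B m n
      = (1 / d) * ∑ k, ∑ s, ∑ a,
          B a (a + 2 * s) * wpow d (2 * s * n) * wpow d (k * (a + s - m)) := by
        rw [psSymbol]
        refine congrArg _ (Finset.sum_congr rfl fun k _ => ?_)
        rw [← sum_comp_two_mul h2]
        refine Finset.sum_congr rfl fun s _ => ?_
        rw [weylSymbol_eq_sum, Finset.sum_mul]
        refine Finset.sum_congr rfl fun a _ => ?_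
        simp only [mul_assoc, ← wpow_add]
        congr 2
        linear_combination (-(k * s)) * ZMod.inv_mul_of_unit 2 h2
    _ = (1 / d) * ∑ s, ∑ a,
          B a (a + 2 * s) * wpow d (2 * s * n) * if a = m - s then (d : ℂ) else 0 := by
        rw [Finset.sum_comm]
        refine congrArg _ (Finset.sum_congr rfl fun s _ => ?_)
        rw [Finset.sum_comm]
        refine Finset.sum_congr rfl fun a _ => ?_
        simp only [← Finset.mul_sum, sum_wpow_mul, sub_eq_zero, eq_sub_iff_add_eq]
    _ = ∑ s, B (m - s) (m + s) * wpow d (2 * s * n) := by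
        simp only [mul_ite, mul_zero, Finset.sum_ite_eq', Finset.mem_univ, if_true,
          Finset.mul_sum]
        refine Finset.sum_congr rfl fun s _ => ?_
        rw [show m - s + 2 * s = m + s by ring]
        field_simp

lemma wignerFn_eq_sum (h2 : IsUnit (2 : ZMod d)) (ρ : Matrix (ZMod d) (ZMod d) ℂ)
    (m n : ZMod d) :
    wignerFn d ρ m n = (1 / d) * ∑ s, ρ (m - s) (m + s) * wpow d (2 * s * n) := by
  have hd : (d : ℂ) ≠ 0 := NeZero.ne _
  rw [← psSymbol_eq_sum h2, wignerFn, psSymbol]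
  field_simp

lemma apply_sub_add_eq_sum_wignerFn (h2 : IsUnit (2 : ZMod d)) (ρ : Matrix (ZMod d) (ZMod d) ℂ)
    (m u : ZMod d) : ρ (m - u) (m + u) = ∑ n, wignerFn d ρ m n * wpow d (-(2 * u * n)) := by
  have hd : (d : ℂ) ≠ 0 := NeZero.ne _
  have hdelta : ∀ s, ∑ n, wpow d (n * (2 * (s - u))) = if s = u then (d : ℂ) else 0 := by
    intro s
    simp only [sum_wpow_mul, h2.mul_right_eq_zero, sub_eq_zero]
  calc ρ (m - u) (m + u)
      = (1 / d) * ∑ s, ρ (m - s) (m + s) * ∑ n, wpow d (n * (2 * (s - u))) := by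
        simp only [hdelta, mul_ite, mul_zero, Finset.sum_ite_eq', Finset.mem_univ, if_true]
        field_simp
    _ = ∑ n, wignerFn d ρ m n * wpow d (-(2 * u * n)) := by
        simp only [wignerFn_eq_sum h2, Finset.mul_sum, Finset.sum_mul]
        rw [Finset.sum_comm]
        refine Finset.sum_congr rfl fun n _ => Finset.sum_congr rfl fun s _ => ?_
        rw [mul_assoc, mul_assoc, ← wpow_add]
        ring_nf

lemma wignerFn_conj_eq_sum_propKernel (h2 : IsUnit (2 : ZMod d))
    (U ρ : Matrix (ZMod d) (ZMod d) ℂ) (m' n' : ZMod d) :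
    wignerFn d (U * ρ * Uᴴ) m' n' =
      ∑ m, ∑ n, propKernel d U m' n' m n * wignerFn d ρ m n := by
  calc wignerFn d (U * ρ * Uᴴ) m' n'
      = (1 / d) * ∑ s, ∑ m, ∑ u, U (m' - s) (m - u) * ρ (m - u) (m + u) *
          starRingEnd ℂ (U (m' + s) (m + u)) * wpow d (2 * s * n') := by
        rw [wignerFn_eq_sum h2]
        refine congrArg _ (Finset.sum_congr rfl fun s _ => ?_)
        rw [sum_sum_comp_sub_add h2 fun a b =>
          U (m' - s) a * ρ a b * starRingEnd ℂ (U (m' + s) b) * wpow d (2 * s * n')]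
        simp only [mul_apply, conjTranspose_apply, Finset.sum_mul]
        rw [Finset.sum_comm]
        rfl
    _ = (1 / d) * ∑ s, ∑ m, ∑ u, ∑ n,
          U (m' - s) (m - u) * starRingEnd ℂ (U (m' + s) (m + u)) *
            wpow d (2 * (s * n' - u * n)) * wignerFn d ρ m n := by
        congr 1
        simp only [apply_sub_add_eq_sum_wignerFn h2 ρ, Finset.mul_sum, Finset.sum_mul]
        refine Finset.sum_congr rfl fun s _ => Finset.sum_congr rfl fun m _ =>
          Finset.sum_congr rfl fun u _ => Finset.sum_congr rfl fun n _ => ?_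
        rw [show 2 * (s * n' - u * n) = 2 * s * n' + -(2 * u * n) by ring, wpow_add]
        ring
    _ = ∑ m, ∑ n, propKernel d U m' n' m n * wignerFn d ρ m n := by
        simp only [propKernel, Finset.mul_sum, Finset.sum_mul, mul_assoc]
        rw [Finset.sum_comm]
        refine Finset.sum_congr rfl fun m _ => ?_
        exact (Finset.sum_congr rfl fun s _ => Finset.sum_comm).trans Finset.sum_comm

lemma propG_eq_propKernel (h2 : IsUnit (2 : ZMod d)) (U : Matrix (ZMod d) (ZMod d) ℂ)
    (m' n' m n : ZMod d) : propG d U (m', n') (m, n) = propKernel d U m' n' m n := by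
  have hd : (d : ℂ) ≠ 0 := NeZero.ne _
  calc propG d U (m', n') (m, n)
      = (1 / d ^ 2) * ∑ t, ∑ p, ∑ q,
          U (m + t - p) (m + t + p) * starRingEnd ℂ (U (m' - t - q) (m' - t + q)) *
            wpow d (2 * (t * n - t * n' + p * n - q * n')) *
            ∑ r, wpow d (r * (2 * (m' - m + p + q))) := by
        rw [propG]
        congr 1
        simp only [psSymbol_eq_sum h2, map_sum, map_mul, conj_wpow, Finset.mul_sum,
          Finset.sum_mul]
        refine Finset.sum_congr rfl fun t _ => ?_
        rw [Finset.sum_comm]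
        refine (Finset.sum_congr rfl fun q _ => Finset.sum_comm).trans (Finset.sum_comm.trans
          (Finset.sum_congr rfl fun p _ => Finset.sum_congr rfl fun q _ =>
            Finset.sum_congr rfl fun r _ => ?_))
        have hphase : wpow d (-(2 * (t * (n' - n) - r * (m' - m)))) * wpow d (2 * p * (n + r)) *
            wpow d (-(2 * q * (n' - r))) =
            wpow d (2 * (t * n - t * n' + p * n - q * n')) *
              wpow d (r * (2 * (m' - m + p + q))) := by
          simp only [← wpow_add]
          ring_nf
        linear_combination
          U (m + t - p) (m + t + p) * starRingEnd ℂ (U (m' - t - q) (m' - t + q)) * hphase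
    _ = (1 / d) * ∑ t, ∑ p,
          U (m + t - p) (m + t + p) *
            starRingEnd ℂ (U (m' - t - (m - m' - p)) (m' - t + (m - m' - p))) *
            wpow d (2 * (t * n - t * n' + p * n - (m - m' - p) * n')) := by
        have hdelta : ∀ p q : ZMod d, 2 * (m' - m + p + q) = 0 ↔ q = m - m' - p := fun p q => by
          rw [h2.mul_right_eq_zero]
          constructor <;> intro h <;> linear_combination h
        simp only [sum_wpow_mul, hdelta, mul_ite, mul_zero, Finset.sum_ite_eq', Finset.mem_univ,
          if_true, Finset.mul_sum]
        refine Finset.sum_congr rfl fun t _ => Finset.sum_congr rfl fun p _ => ?_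
        field_simp
    _ = propKernel d U m' n' m n := by
        rw [propKernel]
        congr 1
        conv_rhs =>
          rw [← Equiv.sum_comp (Equiv.subLeft (m' - m))]
          arg 2; ext a
          rw [← Equiv.sum_comp (Equiv.neg (ZMod d))]
        conv_rhs => rw [← sum_sum_comp_sub_add h2]
        refine Finset.sum_congr rfl fun t _ => Finset.sum_congr rfl fun p _ => ?_
        simp only [Equiv.subLeft_apply, Equiv.neg_apply]
        ring_nf

end DiscreteWigner

theorem discrete_wigner_propagator_general
    (d : ℕ) [NeZero d] (hodd : Odd d)
    (U : Matrix (ZMod d) (ZMod d) ℂ)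
    (ρ : Matrix (ZMod d) (ZMod d) ℂ) (m' n' : ZMod d) :
    wignerFn d (U * ρ * Uᴴ) m' n' =
      ∑ m : ZMod d, ∑ n : ZMod d, propG d U (m', n') (m, n) * wignerFn d ρ m n := by
  have h2 := DiscreteWigner.isUnit_two_of_odd hodd
  simp only [DiscreteWigner.propG_eq_propKernel h2]
  exact DiscreteWigner.wignerFn_conj_eq_sum_propKernel h2 U ρ m' n'

theorem discrete_wigner_propagator
    (d : ℕ) [NeZero d] (hd : Nat.Prime d) (hodd : Odd d)
    (U : Matrix (ZMod d) (ZMod d) ℂ) (hU : U ∈ Matrix.unitaryGroup (ZMod d) ℂ)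
    (ρ : Matrix (ZMod d) (ZMod d) ℂ) (m' n' : ZMod d) :
    wignerFn d (U * ρ * Uᴴ) m' n' =
      ∑ m : ZMod d, ∑ n : ZMod d, propG d U (m', n') (m, n) * wignerFn d ρ m n :=
  discrete_wigner_propagator_general d hodd U ρ m' n'
end
end

section
/- (Two-qutrit purity.) Let χ, t ∈ ℝ, let ψ : ZMod 3 × ZMod 3 → ℂ be the two-qutrit state vector ψ(m,n) = (1/3)·Complex.exp(−i χ t · m·n) (with m·n evaluated via the integer representatives in {0,1,2}), and let ρ₁ be the 3×3 reduced density matrix with entries (ρ₁)_{m,m'} = Σ_{n ∈ ZMod 3} ψ(m,n) · conj(ψ(m',n)). Then Tr(ρ₁²) = ( 27 + 4·(1 + 2·cos(χt))² + 2·(1 + 2·cos(2χt))² ) / 81. -/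
/-!
The reduced state is `ρ₁ = Ψ Ψᴴ` with `Ψ = (ψ m n)`, so it is Hermitian and
`Tr ρ₁² = ∑ |(ρ₁)_{m m'}|²`. Each entry is a geometric sum `(1 + z + z²) / 9` with
`z = exp (i (m' - m) χ t)`, and `1 + z + z² = z (1 + 2 cos ((m' - m) χ t))`. Of the nine pairs
`(m, m')`, three have `m' - m = 0` (contributing `9` each), four have `m' - m = ±1` and two
have `m' - m = ±2`.
-/

open Matrix Complex ComplexConjugate

theorem Matrix.IsHermitian.trace_mul_self_eq_sum_norm_sq {n : Type*} [Fintype n]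
    {ρ : Matrix n n ℂ} (hρ : ρ.IsHermitian) :
    trace (ρ * ρ) = ((∑ i, ∑ j, ‖ρ i j‖ ^ 2 : ℝ) : ℂ) := by
  simp only [trace, diag_apply, mul_apply, ofReal_sum, ofReal_pow]
  refine Finset.sum_congr rfl fun i _ => Finset.sum_congr rfl fun j _ => ?_
  rw [← hρ.apply j i, star_def, mul_conj']

theorem norm_one_add_exp_add_exp_sq_sq (α : ℝ) :
    ‖1 + exp (α * I) + exp (α * I) ^ 2‖ ^ 2 = (1 + 2 * Real.cos α) ^ 2 := by
  have h : 1 + exp (α * I) + exp (α * I) ^ 2 = exp (α * I) * ((1 + 2 * Real.cos α : ℝ) : ℂ) := by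
    have := exp_ne_zero (α * I)
    push_cast
    rw [Complex.cos, neg_mul, exp_neg]
    field_simp
    ring
  rw [h, norm_mul, norm_exp_ofReal_mul_I, one_mul, norm_real, Real.norm_eq_abs, sq_abs]

theorem ZMod.sum_univ_three {M : Type*} [AddCommMonoid M] (f : ZMod 3 → M) :
    ∑ n, f n = f 0 + f 1 + f 2 :=
  Fin.sum_univ_three f

theorem norm_sq_sum_qutrit_phase_mul_conj (χ t : ℝ) (a b : ℕ) :
    ‖∑ n : ZMod 3, (1 / 3) * exp (-I * χ * t * ((a * n.val : ℕ) : ℂ)) *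
        conj ((1 / 3) * exp (-I * χ * t * ((b * n.val : ℕ) : ℂ)))‖ ^ 2 =
      (1 + 2 * Real.cos ((b - a : ℝ) * (χ * t))) ^ 2 / 81 := by
  have hterm : ∀ n : ZMod 3, (1 / 3) * exp (-I * χ * t * ((a * n.val : ℕ) : ℂ)) *
      conj ((1 / 3) * exp (-I * χ * t * ((b * n.val : ℕ) : ℂ))) =
        1 / 9 * exp (((b - a : ℝ) * (χ * t) : ℝ) * I) ^ n.val := by
    intro n
    rw [map_mul, ← exp_conj, ← exp_nat_mul, mul_mul_mul_comm, ← exp_add]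
    simp only [map_mul, map_neg, conj_I, conj_ofReal, map_natCast, map_div₀, map_one, map_ofNat]
    push_cast
    ring_nf
  have hval₂ : (2 : ZMod 3).val = 2 := rfl
  rw [Finset.sum_congr rfl fun n _ => hterm n, ← Finset.mul_sum, ZMod.sum_univ_three,
    ZMod.val_zero, ZMod.val_one, hval₂, pow_zero, pow_one, norm_mul, mul_pow,
    norm_one_add_exp_add_exp_sq_sq]
  norm_num
  ring

theorem two_qutrit_purity
    (χ t : ℝ) (ψ : ZMod 3 → ZMod 3 → ℂ)
    (hψ : ∀ m n : ZMod 3,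
      ψ m n = (1 / 3) * Complex.exp (-(Complex.I) * (χ : ℂ) * (t : ℂ) *
        ((m.val * n.val : ℕ) : ℂ)))
    (ρ₁ : Matrix (ZMod 3) (ZMod 3) ℂ)
    (hρ₁ : ∀ m m' : ZMod 3,
      ρ₁ m m' = ∑ n : ZMod 3, ψ m n * (starRingEnd ℂ) (ψ m' n)) :
    Matrix.trace (ρ₁ * ρ₁) =
      (((27 + 4 * (1 + 2 * Real.cos (χ * t)) ^ 2 +
          2 * (1 + 2 * Real.cos (2 * (χ * t))) ^ 2) / 81 : ℝ) : ℂ) := by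
  have hρ : ρ₁ = of ψ * (of ψ)ᴴ := by
    ext m m'
    simp [hρ₁, mul_apply]
  have hherm : ρ₁.IsHermitian := hρ ▸ isHermitian_mul_conjTranspose_self (of ψ)
  rw [hherm.trace_mul_self_eq_sum_norm_sq]
  congr 1
  have hval₂ : (2 : ZMod 3).val = 2 := rfl
  simp only [hρ₁, hψ, norm_sq_sum_qutrit_phase_mul_conj]
  simp only [ZMod.sum_univ_three, ZMod.val_zero, ZMod.val_one, hval₂]
  norm_num [Real.cos_neg]
  ring
end

section
/- (Short-time growth of the linear entropy.) Let χ ∈ ℝ and, for t ∈ ℝ, let ρ₁(t) be the 3×3 matrix with entries (ρ₁(t))_{m,m'} = (1/9) Σ_{n=0}^{2} Complex.exp(−i χ t · n·(m−m')) (indices via integer representatives in {0,1,2}), and define the linear entropy S_L(t) = 1 − Tr(ρ₁(t)²). Then S_L(t) − (8/9)·χ²·t² = O(t⁴) as t → 0; that is, the function t ↦ S_L(t) − 8χ²t²/9 is big-O of t ↦ t⁴ in the neighborhood filter of 0. -/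
open Matrix Complex Asymptotics Filter

noncomputable section

set_option maxHeartbeats 1000000 in
theorem linear_entropy_short_time
    (χ : ℝ) (ρ₁ : ℝ → Matrix (ZMod 3) (ZMod 3) ℂ)
    (hρ₁ : ∀ t : ℝ, ∀ m m' : ZMod 3,
      ρ₁ t m m' = (1 / 9) * ∑ n ∈ Finset.range 3,
        Complex.exp (-(Complex.I) * (χ : ℂ) * (t : ℂ) *
          (((n : ℤ) * ((m.val : ℤ) - (m'.val : ℤ)) : ℤ) : ℂ)))
    (SL : ℝ → ℝ)
    (hSL : ∀ t : ℝ, SL t = 1 - (Matrix.trace (ρ₁ t * ρ₁ t)).re) :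
    (fun t : ℝ => SL t - 8 * χ ^ 2 * t ^ 2 / 9) =O[nhds 0] (fun t : ℝ => t ^ 4) := by
  -- Step 1: closed form for the trace
  have htr : ∀ t : ℝ, Matrix.trace (ρ₁ t * ρ₁ t) =
      (((45 + 16*Real.cos (χ*t) + 16*Real.cos (2*χ*t) + 4*Real.cos (4*χ*t))/81 : ℝ) : ℂ) := by
    intro t
    have tr : Matrix.trace (ρ₁ t * ρ₁ t)
        = ∑ m : Fin 3, ∑ k : Fin 3, ρ₁ t m k * ρ₁ t k m := by
      simp [Matrix.trace, Matrix.mul_apply, Matrix.diag]; rfl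
    have e0 : ((0:ZMod 3)).val = 0 := rfl
    have e1 : ((1:ZMod 3)).val = 1 := rfl
    have e2 : ((2:ZMod 3)).val = 2 := rfl
    rw [tr, Fin.sum_univ_three]
    have hρ' : ∀ m m' : Fin 3, ρ₁ t m m' = _ := fun m m' => hρ₁ t m m'
    simp only [Fin.sum_univ_three, hρ', Finset.sum_range_succ, Finset.sum_range_zero]
    show _ = _
    simp only [show ((0:Fin 3) : ZMod 3) = 0 from rfl, show ((1:Fin 3) : ZMod 3) = 1 from rfl,
      show ((2:Fin 3) : ZMod 3) = 2 from rfl, e0, e1, e2,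
      show ZMod.val (n := 3) (0:Fin 3) = 0 from rfl, show ZMod.val (n := 3) (1:Fin 3) = 1 from rfl,
      show ZMod.val (n := 3) (2:Fin 3) = 2 from rfl]
    push_cast
    norm_num
    set a : ℂ := Complex.I * (χ:ℂ) * (t:ℂ) with ha
    have key : ∀ (n : ℕ) (z : ℂ), cexp (z * n) = cexp z ^ n := by
      intro n z; rw [mul_comm, Complex.exp_nat_mul]
    have h2 : cexp (a * 2) = cexp a ^ 2 := by rw [show a*2 = a*((2:ℕ):ℂ) by norm_num, key]
    have h4 : cexp (a * 4) = cexp a ^ 4 := by rw [show a*4 = a*((4:ℕ):ℂ) by norm_num, key]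
    have hn2 : cexp (-(a * 2)) = cexp (-a) ^ 2 := by
      rw [show -(a*2) = (-a)*((2:ℕ):ℂ) by push_cast; ring, key]
    have hn4 : cexp (-(a * 4)) = cexp (-a) ^ 4 := by
      rw [show -(a*4) = (-a)*((4:ℕ):ℂ) by push_cast; ring, key]
    have c1 : Complex.cos ((χ:ℂ) * (t:ℂ)) = (cexp a + cexp (-a))/2 := by
      rw [Complex.cos, show ((χ:ℂ)*(t:ℂ))*Complex.I = a by ring,
        show -((χ:ℂ)*(t:ℂ))*Complex.I = -a by ring]
    have c2 : Complex.cos (2 * (χ:ℂ) * (t:ℂ)) = (cexp a ^ 2 + cexp (-a) ^ 2)/2 := by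
      rw [Complex.cos, show (2*(χ:ℂ)*(t:ℂ))*Complex.I = a*2 by ring,
        show -(2*(χ:ℂ)*(t:ℂ))*Complex.I = -(a*2) by ring, h2, hn2]
    have c4 : Complex.cos (4 * (χ:ℂ) * (t:ℂ)) = (cexp a ^ 4 + cexp (-a) ^ 4)/2 := by
      rw [Complex.cos, show (4*(χ:ℂ)*(t:ℂ))*Complex.I = a*4 by ring,
        show -(4*(χ:ℂ)*(t:ℂ))*Complex.I = -(a*4) by ring, h4, hn4]
    have hEF : cexp a * cexp (-a) = 1 := by rw [← Complex.exp_add]; simp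
    rw [h2, h4, hn2, hn4, c1, c2, c4]
    rw [ha] at hEF ⊢
    generalize hEdef : cexp (Complex.I * (χ:ℂ) * (t:ℂ)) = E at hEF ⊢
    generalize hFdef : cexp (-(Complex.I * (χ:ℂ) * (t:ℂ))) = F at hEF ⊢
    linear_combination ((12 + 4*F + 4*E + 8*E*F + 2*E*F^3 + 2*E^3*F + 2*E^3*F^3
      + 2*F^2 + 2*E^2 + 2*E^2*F^2)/81) * hEF
  -- Step 2: each remainder term is O(t^4)
  have hg : ∀ c : ℝ, (fun t : ℝ => Real.cos (c*t) - 1 + c^2*t^2/2) =O[nhds 0]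
      (fun t : ℝ => t^4) := by
    intro c
    apply Asymptotics.IsBigO.of_bound (c^4 * (5/96))
    filter_upwards [Metric.ball_mem_nhds (0:ℝ) (show (0:ℝ) < 1/(|c|+1) by positivity)] with t ht
    rw [Metric.mem_ball, Real.dist_eq, sub_zero] at ht
    have hct : |c*t| ≤ 1 := by
      rw [abs_mul]
      calc |c| * |t| ≤ (|c|+1)*(1/(|c|+1)) :=
            mul_le_mul (by linarith [abs_nonneg c]) (le_of_lt ht) (abs_nonneg t) (by positivity)
        _ = 1 := by field_simp
    have hb := Real.cos_bound hct
    have e : Real.cos (c*t) - 1 + c^2*t^2/2 = Real.cos (c*t) - (1 - (c*t)^2/2) := by ring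
    rw [Real.norm_eq_abs, Real.norm_eq_abs, e]
    refine hb.trans (le_of_eq ?_)
    rw [abs_mul, mul_pow, _root_.abs_pow t, ← _root_.abs_pow, _root_.abs_of_nonneg (by positivity : (0:ℝ) ≤ c^4)]
    ring
  -- Step 3: combine
  have heq : (fun t : ℝ => SL t - 8 * χ ^ 2 * t ^ 2 / 9)
      = fun t : ℝ => (-16/81)*(Real.cos (χ*t) - 1 + χ^2*t^2/2)
        + ((-16/81)*(Real.cos (2*χ*t) - 1 + (2*χ)^2*t^2/2)
          + (-4/81)*(Real.cos (4*χ*t) - 1 + (4*χ)^2*t^2/2)) := by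
    funext t
    rw [hSL, htr, Complex.ofReal_re]
    ring
  rw [heq]
  exact ((hg χ).const_mul_left _).add
    (((hg (2*χ)).const_mul_left _).add ((hg (4*χ)).const_mul_left _))

end
end
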